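/- Let m ∈ ℕ, λ₀ ∈ ℂ, and let χ, ψ₃, ψ₄ be ℂ⁴-valued functions analytic in a neighborhood of λ₀ such that ψ₃(λ₀) and ψ₄(λ₀) are linearly independent over ℂ. Suppose that every derivative of order at most m of the function λ ↦ 𝒢[χ(λ), ψ₃(λ), ψ₄(λ)] vanishes at λ₀. Then there exist vectors α₀, α₁, …, α_m ∈ ℂ² such that for every n ∈ {0,…,m}: χ⁽ⁿ⁾(λ₀)/n! = Σ_{j+k=n, j,k≥0} Ψ⁽ᵏ⁾(λ₀)·α_j/(j!·k!), where Ψ(λ) is the 4×2 matrix with columns ψ₃(λ), ψ₄(λ). Equivalently, there is a ℂ²-valued polynomial α of degree ≤ m with χ(λ) − Ψ(λ)·α(λ) = O((λ−λ₀)^{m+1}) as λ → λ₀. -/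

import Mathlib

/-!
Induct on `N ≤ m + 1`, keeping `χ(z) = Ψ(z) β(z) + (z - z₀)^N σ(z)` near `z₀`, where `β` is a
`ℂ²`-valued polynomial of degree `< N` and `σ` is analytic. Since `Ψ(z) β(z)` lies in the span of
`ψ₃(z), ψ₄(z)`, we get `𝒢[χ, ψ₃, ψ₄] = (z - z₀)^N 𝒢[σ, ψ₃, ψ₄]`, so the vanishing of its `N`-th
derivative at `z₀` gives `𝒢[σ(z₀), ψ₃(z₀), ψ₄(z₀)] = 0`. The `j`-th coordinate of `𝒢[u, v, w]` is
`det(u, v, w, eⱼ)`, and if `u, v, w` are independent some `eⱼ` completes them to a basis; hence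
`σ(z₀) = Ψ(z₀) c`, and `σ - Ψ c = (z - z₀) τ` with `τ` analytic extends the expansion by one order.
Leibniz' rule then reads the derivatives of `χ` off the expansion, with `α_j = j! β_j`.
-/

open scoped BigOperators

/-- The generalized cross product on `ℂ⁴`:
`𝒢[u₁,u₂,u₃] = ∑ j, det(u₁,u₂,u₃,eⱼ) • eⱼ`, where the determinant is that of the
`4×4` matrix whose columns are `u₁,u₂,u₃,eⱼ`. -/
noncomputable def crossG (u v w : Fin 4 → ℂ) : Fin 4 → ℂ :=
  ∑ j : Fin 4,
    (Matrix.of fun i k : Fin 4 =>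
      ![u, v, w, (Pi.single j 1 : Fin 4 → ℂ)] k i).det • (Pi.single j 1 : Fin 4 → ℂ)

open Filter Topology Matrix Finset
open scoped Nat

theorem analyticAt_det {𝕜 ι : Type*} [NontriviallyNormedField 𝕜] [Fintype ι] [DecidableEq ι]
    {M : 𝕜 → Matrix ι ι 𝕜} {x : 𝕜} (hM : ∀ i j, AnalyticAt 𝕜 (fun z => M z i j) x) :
    AnalyticAt 𝕜 (fun z => (M z).det) x := by
  simp only [det_apply, Units.smul_def, zsmul_eq_mul]
  fun_prop

theorem Submodule.exists_single_notMem_of_ne_top {K ι : Type*} [Field K] [Fintype ι]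
    [DecidableEq ι] {p : Submodule K (ι → K)} (hp : p ≠ ⊤) : ∃ j, Pi.single j 1 ∉ p := by
  by_contra! h
  refine hp (eq_top_iff.mpr ?_)
  rw [← (Pi.basisFun K ι).span_eq, Submodule.span_le]
  rintro _ ⟨j, rfl⟩
  simpa using h j

theorem Nat.cast_descFactorial_eq_div {K : Type*} [Field K] [CharZero K] {n k : ℕ} (h : k ≤ n) :
    (n.descFactorial k : K) = n ! / (n - k)! := by
  rw [eq_div_iff (Nat.cast_ne_zero.mpr (n - k).factorial_ne_zero), mul_comm, ← Nat.cast_mul,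
    Nat.factorial_mul_descFactorial h]

section Calculus

variable {𝕜 F : Type*} [NontriviallyNormedField 𝕜] [NormedAddCommGroup F] [NormedSpace 𝕜 F]

theorem AnalyticAt.dslope {f : 𝕜 → F} {x : 𝕜} (hf : AnalyticAt 𝕜 f x) :
    AnalyticAt 𝕜 (dslope f x) x :=
  let ⟨_, hp⟩ := hf
  ⟨_, hp.has_fpower_series_dslope_fslope⟩

theorem iteratedDeriv_smul {f : 𝕜 → 𝕜} {g : 𝕜 → F} {n : ℕ} {x : 𝕜}
    (hf : ContDiffAt 𝕜 n f x) (hg : ContDiffAt 𝕜 n g x) :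
    iteratedDeriv n (f • g) x =
      ∑ i ∈ range (n + 1), n.choose i • iteratedDeriv i f x • iteratedDeriv (n - i) g x := by
  simpa using iteratedDerivWithin_smul (Set.mem_univ x) uniqueDiffOn_univ
    hf.contDiffWithinAt hg.contDiffWithinAt

theorem iteratedDeriv_sub_pow_smul {g : 𝕜 → F} {n : ℕ} {x : 𝕜} (hg : ContDiffAt 𝕜 n g x)
    (j : ℕ) :
    iteratedDeriv n (fun z => (z - x) ^ j • g z) x =
      (n.descFactorial j : 𝕜) • iteratedDeriv (n - j) g x := by
  have hpow (i : ℕ) : iteratedDeriv i (fun z => (z - x) ^ j) x =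
      if i = j then (j ! : 𝕜) else 0 := by
    simp only [iteratedDeriv_comp_sub_const i (· ^ j), sub_self, iteratedDeriv_fun_pow_zero,
      Nat.cast_ite, Nat.cast_zero]
  rw [show (fun z => (z - x) ^ j • g z) = (fun z => (z - x) ^ j) • g from rfl,
    iteratedDeriv_smul (by fun_prop) hg]
  simp only [hpow, ite_smul, zero_smul, smul_ite, smul_zero, sum_ite_eq', mem_range]
  split_ifs with hj
  · rw [Nat.descFactorial_eq_factorial_mul_choose, Nat.cast_mul, mul_comm, mul_smul,
      Nat.cast_smul_eq_nsmul 𝕜 (n.choose j)]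
  · rw [Nat.descFactorial_eq_zero_iff_lt.mpr (by omega), Nat.cast_zero, zero_smul]

end Calculus

section CrossProduct

theorem crossG_apply (u v w : Fin 4 → ℂ) (j : Fin 4) :
    crossG u v w j = (of ![u, v, w, Pi.single j 1]).det := by
  rw [crossG, Finset.sum_apply, Finset.sum_eq_single j]
  · rw [Pi.smul_apply, Pi.single_eq_same, smul_eq_mul, mul_one, ← det_transpose]
    rfl
  · intro i _ hij
    rw [Pi.smul_apply, Pi.single_eq_of_ne' hij, smul_zero]
  · simp

noncomputable def crossGLeft (v w : Fin 4 → ℂ) : (Fin 4 → ℂ) →ₗ[ℂ] Fin 4 → ℂ :=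
  LinearMap.pi fun j =>
    (detRowAlternating : (Fin 4 → ℂ) [⋀^Fin 4]→ₗ[ℂ] ℂ).toMultilinearMap.toLinearMap
      ![0, v, w, Pi.single j 1] 0

theorem crossGLeft_apply (u v w : Fin 4 → ℂ) : crossGLeft v w u = crossG u v w := by
  ext j
  rw [crossG_apply]
  simp only [crossGLeft, LinearMap.pi_apply, MultilinearMap.toLinearMap_apply]
  exact congrArg _ (Fin.update_cons_zero _ _ _)

theorem crossG_add_left_of_mem_span {u s v w : Fin 4 → ℂ} (hs : s ∈ Submodule.span ℂ {v, w}) :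
    crossG (u + s) v w = crossG u v w := by
  have hker : Submodule.span ℂ {v, w} ≤ LinearMap.ker (crossGLeft v w) := by
    rw [Submodule.span_le, Set.insert_subset_iff, Set.singleton_subset_iff]
    refine ⟨?_, ?_⟩ <;> rw [SetLike.mem_coe, LinearMap.mem_ker, crossGLeft_apply] <;> ext j <;>
      rw [Pi.zero_apply, crossG_apply]
    exacts [det_zero_of_row_eq (i := 0) (j := 1) (by decide) rfl,
      det_zero_of_row_eq (i := 0) (j := 2) (by decide) rfl]
  rw [← crossGLeft_apply, map_add, crossGLeft_apply, hker hs, add_zero]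

theorem crossG_smul_left (c : ℂ) (u v w : Fin 4 → ℂ) :
    crossG (c • u) v w = c • crossG u v w := by
  simp_rw [← crossGLeft_apply, map_smul]

theorem mem_span_pair_of_crossG_eq_zero {u v w : Fin 4 → ℂ} (hli : LinearIndependent ℂ ![v, w])
    (h : crossG u v w = 0) : u ∈ Submodule.span ℂ {v, w} := by
  by_contra hu
  have hli3 : LinearIndependent ℂ ![u, v, w] := by
    rw [show ![u, v, w] = Fin.cons u ![v, w] from rfl, linearIndependent_finCons]
    exact ⟨hli, by simpa [Matrix.range_cons, Matrix.range_empty, Set.pair_comm] using hu⟩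
  have hspan : Submodule.span ℂ (Set.range ![u, v, w]) ≠ ⊤ := by
    intro htop
    have := finrank_range_le_card (R := ℂ) ![u, v, w]
    rw [Set.finrank, htop, finrank_top, Module.finrank_fin_fun] at this
    simp at this
  obtain ⟨j, hj⟩ := Submodule.exists_single_notMem_of_ne_top hspan
  have hli4 : LinearIndependent ℂ ![u, v, w, Pi.single j 1] := by
    rw [show ![u, v, w, Pi.single j 1] = Fin.snoc ![u, v, w] (Pi.single j 1) by
      ext i : 1; fin_cases i <;> rfl, linearIndependent_finSnoc]
    exact ⟨hli3, hj⟩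
  have hunit : IsUnit (of ![u, v, w, Pi.single j 1]) := linearIndependent_rows_iff_isUnit.mp hli4
  rw [isUnit_iff_isUnit_det, ← crossG_apply, h] at hunit
  exact not_isUnit_zero hunit

theorem AnalyticAt.crossG {f g h : ℂ → Fin 4 → ℂ} {x : ℂ} (hf : AnalyticAt ℂ f x)
    (hg : AnalyticAt ℂ g x) (hh : AnalyticAt ℂ h x) :
    AnalyticAt ℂ (fun z => crossG (f z) (g z) (h z)) x := by
  refine analyticAt_pi_iff.mpr fun j => ?_
  simp_rw [crossG_apply]
  refine analyticAt_det fun i k => ?_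
  fin_cases i
  exacts [analyticAt_pi_iff.mp hf k, analyticAt_pi_iff.mp hg k, analyticAt_pi_iff.mp hh k,
    analyticAt_const]

end CrossProduct

section Expansion

variable {𝕜 E : Type*} [NontriviallyNormedField 𝕜] [NormedAddCommGroup E] [NormedSpace 𝕜 E]

/-- `Ψ(z) β(z)` for the polynomial `β(z) = ∑_{j<N} (z - z₀)^j β_j` and `Ψ = (ψ₃ ψ₄)`. -/
noncomputable def psiPoly (ψ₃ ψ₄ : 𝕜 → E) (z₀ : 𝕜) (β : ℕ → 𝕜 × 𝕜) (N : ℕ) (z : 𝕜) : E :=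
  ∑ j ∈ range N, (z - z₀) ^ j • ((β j).1 • ψ₃ z + (β j).2 • ψ₄ z)

theorem psiPoly_mem_span (ψ₃ ψ₄ : 𝕜 → E) (z₀ : 𝕜) (β : ℕ → 𝕜 × 𝕜) (N : ℕ) (z : 𝕜) :
    psiPoly ψ₃ ψ₄ z₀ β N z ∈ Submodule.span 𝕜 {ψ₃ z, ψ₄ z} :=
  Submodule.sum_mem _ fun _ _ => Submodule.smul_mem _ _ <|
    Submodule.mem_span_pair.mpr ⟨_, _, rfl⟩

theorem psiPoly_update_succ (ψ₃ ψ₄ : 𝕜 → E) (z₀ : 𝕜) (β : ℕ → 𝕜 × 𝕜) (N : ℕ) (c : 𝕜 × 𝕜)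
    (z : 𝕜) :
    psiPoly ψ₃ ψ₄ z₀ (Function.update β N c) (N + 1) z =
      psiPoly ψ₃ ψ₄ z₀ β N z + (z - z₀) ^ N • (c.1 • ψ₃ z + c.2 • ψ₄ z) := by
  rw [psiPoly, sum_range_succ, Function.update_self]
  congr 1
  refine sum_congr rfl fun j hj => ?_
  rw [Function.update_of_ne (by simp at hj; omega)]

theorem iteratedDeriv_psiPoly {ψ₃ ψ₄ : 𝕜 → E} {z₀ : 𝕜} {n : ℕ} (h₃ : ContDiffAt 𝕜 n ψ₃ z₀)
    (h₄ : ContDiffAt 𝕜 n ψ₄ z₀) (β : ℕ → 𝕜 × 𝕜) (N : ℕ) :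
    iteratedDeriv n (psiPoly ψ₃ ψ₄ z₀ β N) z₀ = ∑ j ∈ range N, (n.descFactorial j : 𝕜) •
      ((β j).1 • iteratedDeriv (n - j) ψ₃ z₀ + (β j).2 • iteratedDeriv (n - j) ψ₄ z₀) := by
  unfold psiPoly
  rw [iteratedDeriv_fun_sum fun j _ => by fun_prop]
  refine sum_congr rfl fun j _ => ?_
  have hle : ((n - j : ℕ) : WithTop ℕ∞) ≤ n := by exact_mod_cast n.sub_le j
  have h₃' := h₃.of_le hle
  have h₄' := h₄.of_le hle
  rw [iteratedDeriv_sub_pow_smul (by fun_prop),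
    iteratedDeriv_fun_add (by fun_prop) (by fun_prop), iteratedDeriv_fun_const_smul_field,
    iteratedDeriv_fun_const_smul_field]

/-- `χ - Ψ β = O((z - z₀)^N)` for the polynomial `β` of `psiPoly`, with an analytic quotient. -/
def IsExpansionModPow (χ ψ₃ ψ₄ : 𝕜 → E) (z₀ : 𝕜) (β : ℕ → 𝕜 × 𝕜) (N : ℕ) : Prop :=
  ∃ σ : 𝕜 → E, AnalyticAt 𝕜 σ z₀ ∧
    χ =ᶠ[𝓝 z₀] fun z => psiPoly ψ₃ ψ₄ z₀ β N z + (z - z₀) ^ N • σ z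

theorem isExpansionModPow_zero {χ : 𝕜 → E} {z₀ : 𝕜} (hχ : AnalyticAt 𝕜 χ z₀)
    (ψ₃ ψ₄ : 𝕜 → E) (β : ℕ → 𝕜 × 𝕜) : IsExpansionModPow χ ψ₃ ψ₄ z₀ β 0 :=
  ⟨χ, hχ, .of_eq <| by simp [psiPoly]⟩

theorem IsExpansionModPow.iteratedDeriv_eq [CompleteSpace E] {χ ψ₃ ψ₄ : 𝕜 → E} {z₀ : 𝕜}
    {β : ℕ → 𝕜 × 𝕜} {N : ℕ} (h : IsExpansionModPow χ ψ₃ ψ₄ z₀ β N)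
    (h₃ : AnalyticAt 𝕜 ψ₃ z₀) (h₄ : AnalyticAt 𝕜 ψ₄ z₀) {n : ℕ} (hn : n < N) :
    iteratedDeriv n χ z₀ = ∑ j ∈ range (n + 1), (n.descFactorial j : 𝕜) •
      ((β j).1 • iteratedDeriv (n - j) ψ₃ z₀ + (β j).2 • iteratedDeriv (n - j) ψ₄ z₀) := by
  obtain ⟨σ, hσ, hχ⟩ := h
  have hpoly : AnalyticAt 𝕜 (psiPoly ψ₃ ψ₄ z₀ β N) z₀ := by
    unfold psiPoly
    fun_prop
  have hrem : AnalyticAt 𝕜 (fun z => (z - z₀) ^ N • σ z) z₀ := by fun_prop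
  rw [hχ.iteratedDeriv_eq, iteratedDeriv_fun_add hpoly.contDiffAt hrem.contDiffAt,
    iteratedDeriv_sub_pow_smul hσ.contDiffAt, Nat.descFactorial_eq_zero_iff_lt.mpr hn,
    Nat.cast_zero, zero_smul, add_zero, iteratedDeriv_psiPoly h₃.contDiffAt h₄.contDiffAt]
  refine (sum_subset (range_subset_range.mpr (by omega)) fun j _ hj => ?_).symm
  rw [Nat.descFactorial_eq_zero_iff_lt.mpr (by simpa using hj), Nat.cast_zero, zero_smul]

end Expansion

section CrossGExpansion

variable {χ ψ₃ ψ₄ : ℂ → Fin 4 → ℂ} {z₀ : ℂ}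

theorem crossG_eventuallyEq_sub_pow_smul {β : ℕ → ℂ × ℂ} {N : ℕ} {σ : ℂ → Fin 4 → ℂ}
    (hχ : χ =ᶠ[𝓝 z₀] fun z => psiPoly ψ₃ ψ₄ z₀ β N z + (z - z₀) ^ N • σ z) :
    (fun z => crossG (χ z) (ψ₃ z) (ψ₄ z)) =ᶠ[𝓝 z₀]
      fun z => (z - z₀) ^ N • crossG (σ z) (ψ₃ z) (ψ₄ z) := by
  filter_upwards [hχ] with z hz
  rw [hz, add_comm, crossG_add_left_of_mem_span (psiPoly_mem_span ψ₃ ψ₄ z₀ β N z),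
    crossG_smul_left]

theorem IsExpansionModPow.exists_succ {β : ℕ → ℂ × ℂ} {N : ℕ}
    (h : IsExpansionModPow χ ψ₃ ψ₄ z₀ β N) (h₃ : AnalyticAt ℂ ψ₃ z₀) (h₄ : AnalyticAt ℂ ψ₄ z₀)
    (hli : LinearIndependent ℂ ![ψ₃ z₀, ψ₄ z₀])
    (hN : iteratedDeriv N (fun z => crossG (χ z) (ψ₃ z) (ψ₄ z)) z₀ = 0) :
    ∃ c, IsExpansionModPow χ ψ₃ ψ₄ z₀ (Function.update β N c) (N + 1) := by
  obtain ⟨σ, hσ, hχ⟩ := h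
  have hσ₀ : crossG (σ z₀) (ψ₃ z₀) (ψ₄ z₀) = 0 := by
    rw [(crossG_eventuallyEq_sub_pow_smul hχ).iteratedDeriv_eq,
      iteratedDeriv_sub_pow_smul (hσ.crossG h₃ h₄).contDiffAt, Nat.descFactorial_self,
      Nat.sub_self, iteratedDeriv_zero, smul_eq_zero] at hN
    exact hN.resolve_left (Nat.cast_ne_zero.mpr N.factorial_ne_zero)
  obtain ⟨a, b, hab⟩ := Submodule.mem_span_pair.mp (mem_span_pair_of_crossG_eq_zero hli hσ₀)
  let ρ z := σ z - (a • ψ₃ z + b • ψ₄ z)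
  have hρ₀ : ρ z₀ = 0 := sub_eq_zero.mpr hab.symm
  refine ⟨(a, b), dslope ρ z₀, AnalyticAt.dslope (by fun_prop), ?_⟩
  filter_upwards [hχ] with z hz
  rw [hz, psiPoly_update_succ, pow_succ, mul_smul, sub_smul_dslope, hρ₀, sub_zero]
  module

theorem exists_isExpansionModPow (hχ : AnalyticAt ℂ χ z₀) (h₃ : AnalyticAt ℂ ψ₃ z₀)
    (h₄ : AnalyticAt ℂ ψ₄ z₀) (hli : LinearIndependent ℂ ![ψ₃ z₀, ψ₄ z₀]) :
    ∀ {N : ℕ}, (∀ n < N, iteratedDeriv n (fun z => crossG (χ z) (ψ₃ z) (ψ₄ z)) z₀ = 0) →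
      ∃ β, IsExpansionModPow χ ψ₃ ψ₄ z₀ β N
  | 0, _ => ⟨0, isExpansionModPow_zero hχ ψ₃ ψ₄ 0⟩
  | N + 1, hvan =>
    let ⟨_, hβ⟩ := exists_isExpansionModPow hχ h₃ h₄ hli fun n hn => hvan n (by omega)
    let ⟨_, hc⟩ := hβ.exists_succ h₃ h₄ hli (hvan N N.lt_succ_self)
    ⟨_, hc⟩

end CrossGExpansion

/-- If `χ, ψ₃, ψ₄ : ℂ → ℂ⁴` are analytic at `z₀`, `ψ₃(z₀)` and `ψ₄(z₀)` are linearly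
independent, and all derivatives of order `≤ m` of `λ ↦ 𝒢[χ(λ), ψ₃(λ), ψ₄(λ)]`
vanish at `z₀`, then there exist vectors `α₀,…,α_m ∈ ℂ²` such that for all `n ≤ m`,
`χ⁽ⁿ⁾(z₀)/n! = Σ_{j+k=n} (α_j).1 • ψ₃⁽ᵏ⁾(z₀)/(j! k!) + (α_j).2 • ψ₄⁽ᵏ⁾(z₀)/(j! k!)`,
i.e. `χ⁽ⁿ⁾(z₀)/n! = Σ_{j+k=n} Ψ⁽ᵏ⁾(z₀)·α_j/(j! k!)` where `Ψ` has columns `ψ₃, ψ₄`. -/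
theorem chi_expansion_of_crossG_vanishing (m : ℕ) (z₀ : ℂ) (χ ψ₃ ψ₄ : ℂ → Fin 4 → ℂ)
    (hχ : AnalyticAt ℂ χ z₀) (h₃ : AnalyticAt ℂ ψ₃ z₀) (h₄ : AnalyticAt ℂ ψ₄ z₀)
    (hli : LinearIndependent ℂ ![ψ₃ z₀, ψ₄ z₀])
    (hvan : ∀ n ≤ m, iteratedDeriv n (fun z => crossG (χ z) (ψ₃ z) (ψ₄ z)) z₀ = 0) :
    ∃ α : ℕ → ℂ × ℂ, ∀ n ≤ m,
      ((Nat.factorial n : ℂ))⁻¹ • iteratedDeriv n χ z₀ =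
        ∑ j ∈ Finset.range (n + 1),
          ((Nat.factorial j : ℂ) * (Nat.factorial (n - j) : ℂ))⁻¹ •
            ((α j).1 • iteratedDeriv (n - j) ψ₃ z₀ +
              (α j).2 • iteratedDeriv (n - j) ψ₄ z₀) := by
  obtain ⟨β, hβ⟩ := exists_isExpansionModPow hχ h₃ h₄ hli (N := m + 1) fun n hn =>
    hvan n (Nat.le_of_lt_succ hn)
  refine ⟨fun j => (j ! : ℂ) • β j, fun n hn => ?_⟩
  rw [hβ.iteratedDeriv_eq h₃ h₄ (Nat.lt_succ_of_le hn), smul_sum]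
  refine sum_congr rfl fun j hj => ?_
  rw [Nat.cast_descFactorial_eq_div (Nat.le_of_lt_succ (mem_range.mp hj))]
  have := Nat.cast_ne_zero (R := ℂ) |>.mpr n.factorial_ne_zero
  have := Nat.cast_ne_zero (R := ℂ) |>.mpr j.factorial_ne_zero
  have := Nat.cast_ne_zero (R := ℂ) |>.mpr (n - j).factorial_ne_zero
  simp only [Prod.smul_fst, Prod.smul_snd, smul_eq_mul]
  match_scalars <;> field_simp
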